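/- Let (A_m)_{m≥0} be a formal orbit portrait of valence N ≥ 2 with degrees (d_m)_{m≥1} and let m ≥ 0. Then no complementary arc of A_m has length exactly 1/d_{m+1}; the sum of the lengths of the non-critical complementary arcs of A_m is strictly less than 1/d_{m+1}; and A_m has at least one critical complementary arc, i.e. a complementary arc of length strictly greater than 1/d_{m+1}. -/

import Mathlib

/-!
The complementary arcs of a finite set with at least two points have total length `1`.
Multiplication by `D = d (m + 1)` is a bijection `A m → A (m + 1)` preserving cyclic order, so it
maps complementary arcs of `A m` injectively to complementary arcs of `A (m + 1)`, multiplying the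
length of every non-critical arc by `D`. An arc of length exactly `1 / D` would collapse to a
point. If every arc were non-critical, the images would have total length `D > 1`; so there is a
critical arc, and since its image has positive length, the `D`-fold lengths of the non-critical
arcs add up to less than `1`.
-/

/-- The unique representative in `[0,1)` of `b - a`; for `a ≠ b` this is the
unique representative of `b − a` in `(0,1)`, the length `ℓ(a,b)` of the arc from `a` to `b`. -/
noncomputable def arcLen (a b : UnitAddCircle) : ℝ :=
  ((AddCircle.equivIco 1 0) (b - a) : ℝ)

/-- The open arc `(a,b) = {a + t : 0 < t < ℓ(a,b)}` in `ℝ/ℤ`. -/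
def openArc (a b : UnitAddCircle) : Set UnitAddCircle :=
  {x | ∃ t : ℝ, 0 < t ∧ t < arcLen a b ∧ x = a + (t : UnitAddCircle)}

/-- `(a,b,c)` is in positive cyclic order: `ℓ(a,b) < ℓ(a,c)`. -/
def PosCyclic (a b c : UnitAddCircle) : Prop := arcLen a b < arcLen a c

/-- A formal orbit portrait of valence `N` with degrees `d`: a sequence of
`N`-element subsets `A m` of `ℝ/ℤ` such that `θ ↦ d_{m+1}·θ` maps `A m`
bijectively onto `A (m+1)` and carries every triple of pairwise distinct points
of `A m` in positive cyclic order to a triple in positive cyclic order. -/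
def IsFormalPortrait (N : ℕ) (d : ℕ → ℕ) (A : ℕ → Set UnitAddCircle) : Prop :=
  ∀ m : ℕ,
    (A m).Finite ∧ (A m).ncard = N ∧
    Set.BijOn (fun θ => d (m + 1) • θ) (A m) (A (m + 1)) ∧
    ∀ a ∈ A m, ∀ b ∈ A m, ∀ c ∈ A m, a ≠ b → a ≠ c → b ≠ c →
      PosCyclic a b c →
        PosCyclic (d (m + 1) • a) (d (m + 1) • b) (d (m + 1) • c)

/-- `(a,b)` is a complementary arc of `A`: `a, b ∈ A`, `a ≠ b`, and the open
arc `(a,b)` contains no point of `A`. -/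
def IsComplArc (A : Set UnitAddCircle) (a b : UnitAddCircle) : Prop :=
  a ≠ b ∧ a ∈ A ∧ b ∈ A ∧ openArc a b ∩ A = ∅

open Set Function

lemma arcLen_nonneg (a b : UnitAddCircle) : 0 ≤ arcLen a b :=
  ((AddCircle.equivIco 1 0) (b - a)).2.1

lemma arcLen_lt_one (a b : UnitAddCircle) : arcLen a b < 1 :=
  ((AddCircle.equivIco 1 0) (b - a)).2.2.trans_eq (zero_add 1)

lemma coe_arcLen (a b : UnitAddCircle) : (arcLen a b : UnitAddCircle) = b - a :=
  (AddCircle.equivIco 1 0).symm_apply_apply (b - a)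

lemma arcLen_eq_fract {a b : UnitAddCircle} {r : ℝ} (h : b - a = r) :
    arcLen a b = Int.fract r := by
  simp [arcLen, h, AddCircle.coe_equivIco_mk_apply]

@[simp]
lemma arcLen_self (a : UnitAddCircle) : arcLen a a = 0 := by
  simp [arcLen_eq_fract (a := a) (b := a) (r := 0) (by simp)]

lemma arcLen_injective (a : UnitAddCircle) : Injective (arcLen a) := fun b c h =>
  sub_left_inj.1 (by rw [← coe_arcLen, h, coe_arcLen])

lemma arcLen_pos {a b : UnitAddCircle} (h : a ≠ b) : 0 < arcLen a b :=
  (arcLen_nonneg a b).lt_of_ne fun e => h (arcLen_injective a (by rw [arcLen_self, e]))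

lemma arcLen_eq_fract_sub (c a b : UnitAddCircle) :
    arcLen a b = Int.fract (arcLen c b - arcLen c a) :=
  arcLen_eq_fract (by rw [AddCircle.coe_sub, coe_arcLen, coe_arcLen]; abel)

lemma arcLen_eq_sub_of_le {a b c : UnitAddCircle} (h : arcLen c a ≤ arcLen c b) :
    arcLen a b = arcLen c b - arcLen c a := by
  rw [arcLen_eq_fract_sub c, Int.fract_eq_self]
  constructor <;> linarith [arcLen_lt_one c b, arcLen_nonneg c a]

lemma arcLen_eq_sub_add_one_of_lt {a b c : UnitAddCircle} (h : arcLen c b < arcLen c a) :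
    arcLen a b = arcLen c b - arcLen c a + 1 := by
  rw [arcLen_eq_fract_sub c, ← Int.fract_add_one, Int.fract_eq_self]
  constructor <;> linarith [arcLen_lt_one c a, arcLen_nonneg c b]

lemma arcLen_nsmul (D : ℕ) (a b : UnitAddCircle) :
    arcLen (D • a) (D • b) = Int.fract (D * arcLen a b) :=
  arcLen_eq_fract (by rw [← smul_sub, ← coe_arcLen, ← nsmul_eq_mul, AddCircle.coe_nsmul])

lemma arcLen_nsmul_of_lt_inv {D : ℕ} {a b : UnitAddCircle} (h : arcLen a b < 1 / D) :
    arcLen (D • a) (D • b) = D * arcLen a b := by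
  rcases (Nat.cast_nonneg (α := ℝ) D).eq_or_lt with hD | hD
  · rw [← hD, div_zero] at h
    exact absurd h (arcLen_nonneg a b).not_gt
  rw [arcLen_nsmul, Int.fract_eq_self]
  exact ⟨mul_nonneg hD.le (arcLen_nonneg a b), by rwa [← lt_div_iff₀' hD]⟩

lemma nsmul_eq_nsmul_of_arcLen_eq_inv {D : ℕ} {a b : UnitAddCircle} (h : arcLen a b = 1 / D) :
    D • a = D • b := by
  rcases eq_or_ne D 0 with rfl | hD
  · simp
  rw [eq_comm, ← sub_eq_zero, ← smul_sub, ← coe_arcLen, h, ← AddCircle.coe_nsmul, nsmul_eq_mul,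
    mul_one_div_cancel (by exact_mod_cast hD), AddCircle.coe_period]

lemma mem_openArc_iff {a b x : UnitAddCircle} :
    x ∈ openArc a b ↔ 0 < arcLen a x ∧ arcLen a x < arcLen a b := by
  constructor
  · rintro ⟨t, ht0, htb, rfl⟩
    rw [arcLen_eq_fract (r := t) (by abel),
      Int.fract_eq_self.2 ⟨ht0.le, htb.trans (arcLen_lt_one a b)⟩]
    exact ⟨ht0, htb⟩
  · rintro ⟨h0, hb⟩
    exact ⟨arcLen a x, h0, hb, by rw [coe_arcLen]; abel⟩

lemma isComplArc_iff {A : Set UnitAddCircle} {a b : UnitAddCircle} :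
    IsComplArc A a b ↔
      a ≠ b ∧ a ∈ A ∧ b ∈ A ∧ ∀ x ∈ A, x ≠ a → arcLen a b ≤ arcLen a x := by
  simp only [IsComplArc, eq_empty_iff_forall_notMem, mem_inter_iff, mem_openArc_iff, not_and]
  refine and_congr_right fun _ => and_congr_right fun _ => and_congr_right fun _ =>
    ⟨fun h x hx hxa => not_lt.1 fun hlt => h x ⟨arcLen_pos (Ne.symm hxa), hlt⟩ hx,
      fun h x ⟨hx0, hlt⟩ hx => (h x hx ?_).not_gt hlt⟩
  rintro rfl
  simp at hx0

namespace IsComplArc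

variable {A : Set UnitAddCircle} {a b c x : UnitAddCircle}

lemma arcLen_le (h : IsComplArc A a b) (hx : x ∈ A) (hxa : x ≠ a) : arcLen a b ≤ arcLen a x :=
  (isComplArc_iff.1 h).2.2.2 x hx hxa

lemma right_unique (h : IsComplArc A a b) (h' : IsComplArc A a c) : b = c :=
  arcLen_injective a <| (h.arcLen_le h'.2.2.1 h'.1.symm).antisymm (h'.arcLen_le h.2.2.1 h.1.symm)

lemma left_unique (h : IsComplArc A a c) (h' : IsComplArc A b c) : a = b := by
  by_contra hab
  have hca : arcLen b c < arcLen b a :=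
    (h'.arcLen_le h.2.1 hab).lt_of_ne fun e => h.1 (arcLen_injective b e).symm
  have hba : arcLen b b < arcLen b a := by simpa using arcLen_pos (Ne.symm hab)
  have hle := h.arcLen_le h'.2.1 (Ne.symm hab)
  rw [arcLen_eq_sub_add_one_of_lt hca, arcLen_eq_sub_add_one_of_lt hba, arcLen_self] at hle
  linarith [arcLen_pos h'.1]

/-- Seen from a base point `c`, the arc out of `a` moves forward unless `a` is the last point
of `A` before returning to `c`. -/
lemma arcLen_lt_of_lt (h : IsComplArc A a b) (hx : x ∈ A) (hax : arcLen c a < arcLen c x) :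
    arcLen c a < arcLen c b := by
  by_contra! hba
  have hba : arcLen c b < arcLen c a :=
    hba.lt_of_ne fun e => h.1 (arcLen_injective c e).symm
  have hle := h.arcLen_le hx fun e => hax.ne (by rw [e])
  rw [arcLen_eq_sub_add_one_of_lt hba, arcLen_eq_sub_of_le hax.le] at hle
  linarith [arcLen_lt_one c x, arcLen_nonneg c b]

end IsComplArc

lemma exists_isComplArc {A : Set UnitAddCircle} (hA : A.Finite) (hA' : A.Nontrivial)
    {a : UnitAddCircle} (ha : a ∈ A) : ∃ b, IsComplArc A a b := by
  obtain ⟨x, hx, hxa⟩ := hA'.exists_ne a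
  obtain ⟨b, ⟨hb, hba⟩, hmin⟩ := exists_min_image (A \ {a}) (arcLen a) (hA.sdiff) ⟨x, hx, hxa⟩
  exact ⟨b, isComplArc_iff.2 ⟨Ne.symm hba, ha, hb, fun y hy hya => hmin y ⟨hy, hya⟩⟩⟩

lemma finsum_mem_le_finsum_mem_of_subset {α M : Type*} [AddCommMonoid M] [PartialOrder M]
    [IsOrderedAddMonoid M] {s t : Set α} {f : α → M} (hst : s ⊆ t) (ht : t.Finite)
    (hf : ∀ x ∈ t, 0 ≤ f x) : ∑ᶠ x ∈ s, f x ≤ ∑ᶠ x ∈ t, f x := by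
  rw [← finsum_mem_add_sdiff hst ht, finsum_mem_eq_finite_toFinset_sum _ (ht.sdiff)]
  exact le_add_of_nonneg_right (Finset.sum_nonneg fun x hx => hf x (by simp_all))

def complArcs (A : Set UnitAddCircle) : Set (UnitAddCircle × UnitAddCircle) :=
  {p | IsComplArc A p.1 p.2}

lemma complArcs_finite {A : Set UnitAddCircle} (hA : A.Finite) : (complArcs A).Finite :=
  (hA.prod hA).subset fun _ hp => ⟨hp.2.1, hp.2.2.1⟩

/-- Measuring from `c ∈ A`, every complementary arc `(a, b)` has length `ℓ(c,b) - ℓ(c,a)`,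
except the one leaving the point `z` of `A` farthest from `c`, which wraps around and gets an
extra `1`; the differences telescope. -/
lemma finsum_mem_complArcs_arcLen {A : Set UnitAddCircle} (hA : A.Finite) (hA' : A.Nontrivial) :
    ∑ᶠ p ∈ complArcs A, arcLen p.1 p.2 = 1 := by
  choose! σ hσ using fun a (ha : a ∈ A) => exists_isComplArc hA hA' ha
  have hσA : MapsTo σ A A := fun a ha => (hσ a ha).2.2.1
  have hσbij : BijOn σ A A := (hA.injOn_iff_bijOn_of_mapsTo hσA).1 fun a ha b hb e =>
    (hσ a ha).left_unique (e ▸ hσ b hb)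
  have hcompl : complArcs A = (fun a => (a, σ a)) '' A := by
    ext ⟨a, b⟩
    refine ⟨fun h => ⟨a, h.2.1, Prod.ext rfl ((hσ a h.2.1).right_unique h)⟩, ?_⟩
    rintro ⟨a, ha, he⟩
    cases he
    exact hσ a ha
  obtain ⟨c, hc⟩ := hA'.nonempty
  obtain ⟨z, hz, hzmax⟩ := exists_max_image A (arcLen c) hA ⟨c, hc⟩
  have hstep : ∀ a ∈ A,
      arcLen a (σ a) = (arcLen c (σ a) - arcLen c a) + if a = z then 1 else 0 := by
    intro a ha
    split_ifs with haz
    · subst haz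
      exact arcLen_eq_sub_add_one_of_lt <| (hzmax _ (hσA ha)).lt_of_ne fun e =>
        (hσ a ha).1 (arcLen_injective c e).symm
    · rw [add_zero]
      exact arcLen_eq_sub_of_le ((hσ a ha).arcLen_lt_of_lt hz <| (hzmax a ha).lt_of_ne fun e =>
        haz (arcLen_injective c e)).le
  rw [hcompl, finsum_mem_image fun a _ b _ e => (Prod.ext_iff.1 e).1, finsum_mem_congr rfl hstep,
    finsum_mem_add_distrib hA, finsum_mem_sub_distrib _ _ hA,
    finsum_mem_eq_of_bijOn σ hσbij fun _ _ => rfl, sub_self, zero_add,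
    finsum_mem_eq_finite_toFinset_sum _ hA, Finset.sum_ite_eq']
  simp [hz]

/-- The last clause of `IsFormalPortrait`, for `f = (d (m + 1) • ·)`. -/
def PreservesPosCyclicOn (f : UnitAddCircle → UnitAddCircle) (A : Set UnitAddCircle) : Prop :=
  ∀ a ∈ A, ∀ b ∈ A, ∀ c ∈ A, a ≠ b → a ≠ c → b ≠ c → PosCyclic a b c →
    PosCyclic (f a) (f b) (f c)

section PosCyclicMaps

variable {A B : Set UnitAddCircle} {f : UnitAddCircle → UnitAddCircle}

lemma IsComplArc.map (hf : BijOn f A B) (hford : PreservesPosCyclicOn f A) {a b : UnitAddCircle}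
    (h : IsComplArc A a b) : IsComplArc B (f a) (f b) := by
  refine isComplArc_iff.2 ⟨fun e => h.1 (hf.injOn h.2.1 h.2.2.1 e), hf.mapsTo h.2.1,
    hf.mapsTo h.2.2.1, ?_⟩
  intro _ hx' hxa
  obtain ⟨x, hx, rfl⟩ := hf.surjOn hx'
  have hxa : x ≠ a := fun e => hxa (by rw [e])
  rcases eq_or_ne x b with rfl | hxb
  · exact le_rfl
  exact (hford a h.2.1 b h.2.2.1 x hx h.1 hxa.symm hxb.symm <|
    (h.arcLen_le hx hxa).lt_of_ne fun e => hxb (arcLen_injective a e).symm).le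

lemma finsum_mem_arcLen_map_le_one (hB : B.Finite) (hB' : B.Nontrivial) (hf : BijOn f A B)
    (hford : PreservesPosCyclicOn f A) {T : Set (UnitAddCircle × UnitAddCircle)}
    (hT : T ⊆ complArcs A) : ∑ᶠ p ∈ T, arcLen (f p.1) (f p.2) ≤ 1 := by
  have hinj : InjOn (Prod.map f f) T := fun p hp q hq e =>
    Prod.ext (hf.injOn (hT hp).2.1 (hT hq).2.1 (Prod.ext_iff.1 e).1)
      (hf.injOn (hT hp).2.2.1 (hT hq).2.2.1 (Prod.ext_iff.1 e).2)
  calc ∑ᶠ p ∈ T, arcLen (f p.1) (f p.2)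
      = ∑ᶠ q ∈ Prod.map f f '' T, arcLen q.1 q.2 :=
        (finsum_mem_image (f := fun q => arcLen q.1 q.2) hinj).symm
    _ ≤ ∑ᶠ q ∈ complArcs B, arcLen q.1 q.2 :=
        finsum_mem_le_finsum_mem_of_subset (image_subset_iff.2 fun p hp => (hT hp).map hf hford)
          (complArcs_finite hB) fun q _ => arcLen_nonneg q.1 q.2
    _ = 1 := finsum_mem_complArcs_arcLen hB hB'

end PosCyclicMaps

lemma IsFormalPortrait.nontrivial {N : ℕ} {d : ℕ → ℕ} {A : ℕ → Set UnitAddCircle}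
    (hA : IsFormalPortrait N d A) (hN : 2 ≤ N) (m : ℕ) : (A m).Nontrivial := by
  have := (hA m).1.to_subtype
  exact one_lt_ncard_iff_nontrivial.1 ((hA m).2.1 ▸ hN)

/-- No complementary arc of `A m` has length exactly `1/d_{m+1}`; the total
length of the non-critical complementary arcs is `< 1/d_{m+1}`; and there is
at least one critical complementary arc. -/
theorem exists_critical_arc (N : ℕ) (hN : 2 ≤ N) (d : ℕ → ℕ) (hd : ∀ m, 1 ≤ m → 2 ≤ d m)
    (A : ℕ → Set UnitAddCircle) (hA : IsFormalPortrait N d A) (m : ℕ) :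
    (∀ a b : UnitAddCircle, IsComplArc (A m) a b → arcLen a b ≠ 1 / (d (m + 1) : ℝ)) ∧
    (∑ᶠ p ∈ {p : UnitAddCircle × UnitAddCircle |
        IsComplArc (A m) p.1 p.2 ∧ arcLen p.1 p.2 < 1 / (d (m + 1) : ℝ)},
      arcLen p.1 p.2) < 1 / (d (m + 1) : ℝ) ∧
    ∃ a b : UnitAddCircle, IsComplArc (A m) a b ∧ 1 / (d (m + 1) : ℝ) < arcLen a b := by
  obtain ⟨hfin, -, hbij, hord⟩ := hA m
  set D := d (m + 1)
  have hD : (1 : ℝ) < D := by exact_mod_cast hd (m + 1) (by omega)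
  have map_le_one {T} (hT : T ⊆ complArcs (A m)) :=
    finsum_mem_arcLen_map_le_one (hA (m + 1)).1 (hA.nontrivial hN (m + 1)) hbij hord hT
  have ne_inv : ∀ a b, IsComplArc (A m) a b → arcLen a b ≠ 1 / D := fun a b h e =>
    h.1 (hbij.injOn h.2.1 h.2.2.1 (nsmul_eq_nsmul_of_arcLen_eq_inv e))
  set Q := {p ∈ complArcs (A m) | arcLen p.1 p.2 < 1 / D}
  have hQS : Q ⊆ complArcs (A m) := sep_subset _ _
  have hQmap : ∑ᶠ p ∈ Q, arcLen (D • p.1) (D • p.2) = D * ∑ᶠ p ∈ Q, arcLen p.1 p.2 := by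
    rw [mul_finsum_mem]
    exact finsum_mem_congr rfl fun p hp => arcLen_nsmul_of_lt_inv hp.2
  obtain ⟨c, hc, hcQ⟩ : ∃ c ∈ complArcs (A m), c ∉ Q := by
    by_contra! hall
    have hle := map_le_one hQS
    rw [hQmap, hQS.antisymm hall, finsum_mem_complArcs_arcLen hfin (hA.nontrivial hN m)] at hle
    linarith
  have hcrit : 1 / D < arcLen c.1 c.2 :=
    (not_lt.1 fun h => hcQ ⟨hc, h⟩).lt_of_ne' (ne_inv _ _ hc)
  refine ⟨ne_inv, ?_, c.1, c.2, hc, hcrit⟩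
  change ∑ᶠ p ∈ Q, arcLen p.1 p.2 < 1 / D
  have hle := map_le_one (insert_subset hc hQS)
  rw [finsum_mem_insert _ hcQ ((complArcs_finite hfin).subset hQS), hQmap] at hle
  rw [lt_div_iff₀' (by linarith)]
  linarith [arcLen_pos (hc.map hbij hord).1]
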